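/- arXiv:math/0506529 — 6 statements merged into one kernel-verified Lean document; each statement's English description precedes it below -/
import Mathlib

section
/- Let D be a connected finite graph and H a nested set on D (a collection of pairwise compatible connected subgraphs of D containing D, where two subgraphs are compatible if one contains the other or they are orthogonal, i.e. no edge joins them). For B in H, let i_H(B) be the union of the maximal elements of H properly contained in B, and set n(B;H) = |V(B) \ V(i_H(B))|. Then the sum over B in H of (n(B;H) - 1) equals |V(D)| - |H|. -/
open scoped Classical

section NestedSets

variable {V : Type*} [Fintype V] [DecidableEq V]

/-- The (induced subgraph on the) finite vertex set `B` is connected (in particular nonempty). -/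
def Conn (G : SimpleGraph V) (B : Finset V) : Prop :=
  (G.induce (B : Set V)).Connected

/-- Two vertex sets are orthogonal: no edge of `G` joins a vertex of one to a vertex
of the other. -/
def Orth (G : SimpleGraph V) (B C : Finset V) : Prop :=
  ∀ a ∈ B, ∀ b ∈ C, ¬ G.Adj a b

/-- Two subdiagrams are compatible if one contains the other or they are orthogonal. -/
def Compat (G : SimpleGraph V) (B C : Finset V) : Prop :=
  B ⊆ C ∨ C ⊆ B ∨ Orth G B C

/-- A nested set on the (connected) diagram `D` with vertex set `V`: a collection of
pairwise compatible connected subdiagrams containing `D` itself. -/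
def Nested (G : SimpleGraph V) (H : Finset (Finset V)) : Prop :=
  Finset.univ ∈ H ∧ (∀ B ∈ H, Conn G B) ∧ ∀ B ∈ H, ∀ C ∈ H, Compat G B C

/-- `iN H B` is the union of the elements of `H` strictly contained in `B`;
this coincides with the union of the *maximal* elements of `H` strictly contained in `B`. -/
noncomputable def iN (H : Finset (Finset V)) (B : Finset V) : Finset V :=
  (H.filter fun C => C ⊂ B).sup id

/-- `nN H B = n(B;H)` is the number of vertices of `B` not covered by the maximal
elements of `H` strictly contained in `B`. -/
noncomputable def nN (H : Finset (Finset V)) (B : Finset V) : ℕ :=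
  (B \ iN H B).card

/-- `C` is a connected component of (the induced subgraph on) `S`. -/
def IsCC (G : SimpleGraph V) (S C : Finset V) : Prop :=
  C ⊆ S ∧ Conn G C ∧ ∀ C', C ⊆ C' → C' ⊆ S → Conn G C' → C' = C

/-- A maximal nested set on `D`. -/
def MaxNested (G : SimpleGraph V) (F : Finset (Finset V)) : Prop :=
  Nested G F ∧ ∀ K, Nested G K → F ⊆ K → K = F

end NestedSets

/-!
The sets `B \ i_H(B)`, `B ∈ H`, partition the vertex set: every vertex lies in this set for
the smallest member of `H` containing it, and two of these sets cannot meet, since for nested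
`B ⊂ C` the smaller one is removed from `C`, while orthogonal connected sets sharing a vertex
are both that single vertex. Hence `∑ n(B;H) = |V(D)|`.
-/

section PartitionByNested

variable {V : Type*} {G : SimpleGraph V}

lemma Orth.eq_singleton_of_mem {B C : Finset V} (ho : Orth G B C) (hB : Conn G B)
    {v : V} (hvB : v ∈ B) (hvC : v ∈ C) : B = {v} := by
  refine Finset.eq_singleton_iff_unique_mem.mpr ⟨hvB, fun w hwB => ?_⟩
  by_contra hwv
  have : Nontrivial (B : Set V) :=
    nontrivial_of_ne ⟨w, hwB⟩ ⟨v, hvB⟩ (Subtype.coe_ne_coe.mp hwv)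
  obtain ⟨u, hvu⟩ := hB.preconnected.exists_adj_of_nontrivial ⟨v, hvB⟩
  exact ho u u.2 v hvC hvu.symm

lemma Orth.symm {B C : Finset V} (ho : Orth G B C) : Orth G C B :=
  fun a ha b hb hab => ho b hb a ha hab.symm

variable [DecidableEq V]

lemma mem_iN_of_ssubset {H : Finset (Finset V)} {B C : Finset V} (hC : C ∈ H) (hCB : C ⊂ B)
    {v : V} (hv : v ∈ C) : v ∈ iN H B :=
  Finset.mem_sup.mpr ⟨C, Finset.mem_filter.mpr ⟨hC, hCB⟩, hv⟩

lemma disjoint_sdiff_iN {H : Finset (Finset V)} (hconn : ∀ B ∈ H, Conn G B)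
    (hcompat : ∀ B ∈ H, ∀ C ∈ H, Compat G B C) {B C : Finset V} (hB : B ∈ H) (hC : C ∈ H)
    (hBC : B ≠ C) : Disjoint (B \ iN H B) (C \ iN H C) := by
  refine Finset.disjoint_left.mpr fun v hvB hvC => ?_
  rw [Finset.mem_sdiff] at hvB hvC
  rcases hcompat B hB C hC with hsub | hsub | ho
  · exact hvC.2 (mem_iN_of_ssubset hB (hsub.ssubset_of_ne hBC) hvB.1)
  · exact hvB.2 (mem_iN_of_ssubset hC (hsub.ssubset_of_ne hBC.symm) hvC.1)
  · exact hBC ((ho.eq_singleton_of_mem (hconn B hB) hvB.1 hvC.1).trans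
      (ho.symm.eq_singleton_of_mem (hconn C hC) hvC.1 hvB.1).symm)

lemma exists_mem_sdiff_iN {H : Finset (Finset V)} {B : Finset V} (hB : B ∈ H) {v : V}
    (hv : v ∈ B) : ∃ C ∈ H, v ∈ C \ iN H C := by
  obtain ⟨C, hC, hCmin⟩ :=
    Finset.exists_min_image (H.filter (v ∈ ·)) Finset.card ⟨B, Finset.mem_filter.mpr ⟨hB, hv⟩⟩
  rw [Finset.mem_filter] at hC
  refine ⟨C, hC.1, Finset.mem_sdiff.mpr ⟨hC.2, fun hvi => ?_⟩⟩
  obtain ⟨C', hC', hvC'⟩ := Finset.mem_sup.mp hvi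
  rw [Finset.mem_filter] at hC'
  exact (Finset.card_lt_card hC'.2).not_ge (hCmin C' (Finset.mem_filter.mpr ⟨hC'.1, hvC'⟩))

lemma Nested.sum_nN [Fintype V] {H : Finset (Finset V)} (hH : Nested G H) :
    ∑ B ∈ H, nN H B = Fintype.card V := by
  obtain ⟨huniv, hconn, hcompat⟩ := hH
  unfold nN
  rw [← Finset.card_univ, ← Finset.card_biUnion fun B hB C hC hBC =>
    disjoint_sdiff_iN hconn hcompat hB hC hBC]
  congr 1
  refine Finset.eq_univ_of_forall fun v => Finset.mem_biUnion.mpr ?_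
  exact exists_mem_sdiff_iN huniv (Finset.mem_univ v)

end PartitionByNested

theorem stmt0_general {V : Type*} [Fintype V] [DecidableEq V]
    (G : SimpleGraph V)
    (H : Finset (Finset V)) (hH : Nested G H) :
    ∑ B ∈ H, ((nN H B : ℤ) - 1) = (Fintype.card V : ℤ) - H.card := by
  rw [Finset.sum_sub_distrib, ← Nat.cast_sum, hH.sum_nN, Finset.sum_const, nsmul_one]

/-- For a nested set `H` on a connected diagram `D`,
`∑_{B ∈ H} (n(B;H) - 1) = |V(D)| - |H|`. -/
theorem stmt0 {V : Type*} [Fintype V] [DecidableEq V]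
    (G : SimpleGraph V) (hG : G.Connected)
    (H : Finset (Finset V)) (hH : Nested G H) :
    ∑ B ∈ H, ((nN H B : ℤ) - 1) = (Fintype.card V : ℤ) - H.card :=
  stmt0_general G H hH
end

section
/- Let V be a finite-dimensional complex vector space, X a finite set of nonzero linear forms on V, and let A be the holonomy algebra: the completion of the quotient of the free associative algebra on generators t_x (x ∈ X) by the relations [t_x, Σ_{y ∈ X∩U} t_y] = 0 for every two-dimensional subspace U of V* spanned by elements of X and every x ∈ X ∩ U. For a subspace B of V* set t_B = Σ_{x ∈ X∩B} t_x. Then for any two irreducible subspaces B, C in the lattice generated by X which form a nested pair (i.e. either B ⊆ C, or C ⊆ B, or B and C are in direct sum and are the irreducible summands of B ⊕ C), one has [t_B, t_C] = 0. -/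
open scoped Classical

section Holonomy

variable {V : Type*} [AddCommGroup V] [Module ℂ V]

/-- A subspace of `V*` lies in the lattice `L` generated by the finite set of linear
forms `X` if it is spanned by a subset of `X`. -/
def InLat (X : Finset (Module.Dual ℂ V)) (U : Submodule ℂ (Module.Dual ℂ V)) : Prop :=
  ∃ S : Finset (Module.Dual ℂ V), S ⊆ X ∧ U = Submodule.span ℂ (S : Set (Module.Dual ℂ V))

/-- A decomposition of `U ∈ L \ {0}`: a family `U₁, …, U_k` of nonzero elements of the
lattice such that every nonzero `W ∈ L` with `W ⊆ U` satisfies `W ∩ U_i ∈ L` for all `i`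
and `W = (W ∩ U₁) ⊕ ⋯ ⊕ (W ∩ U_k)`. -/
def IsDecomp (X : Finset (Module.Dual ℂ V)) (U : Submodule ℂ (Module.Dual ℂ V))
    {k : ℕ} (Us : Fin k → Submodule ℂ (Module.Dual ℂ V)) : Prop :=
  (∀ i, InLat X (Us i) ∧ Us i ≠ ⊥) ∧ U = ⨆ i, Us i ∧
    ∀ W : Submodule ℂ (Module.Dual ℂ V), InLat X W → W ≠ ⊥ → W ≤ U →
      (∀ i, InLat X (W ⊓ Us i)) ∧ W = ⨆ i, (W ⊓ Us i) ∧
        iSupIndep fun i => W ⊓ Us i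

/-- An element of the lattice is irreducible if it is nonzero and admits no decomposition
with at least two summands. -/
def Irred (X : Finset (Module.Dual ℂ V)) (U : Submodule ℂ (Module.Dual ℂ V)) : Prop :=
  InLat X U ∧ U ≠ ⊥ ∧
    ∀ k : ℕ, 2 ≤ k → ∀ Us : Fin k → Submodule ℂ (Module.Dual ℂ V), ¬ IsDecomp X U Us

end Holonomy

/-! Both `t_B` and `t_C` split as sums of line elements `t_ℓ = ∑_{x ∈ X ∩ ℓ} t_x` over the lines
`ℓ` spanned by elements of `X`. If `B ≤ C`, each line `ℓ ⊆ B` commutes with `t_C`: `t_C - t_ℓ` is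
the sum over the planes `P ⊆ C` through `ℓ` of `t_P - t_ℓ`, and the relations of the plane `P`
say that `t_ℓ` commutes with `t_P`. If `B` and `C` are nested but not comparable, then for lines
`ℓ ⊆ B` and `m ⊆ C` the decomposition `B ⊕ C` forces the plane `ℓ ⊕ m` to meet `X` only in
`ℓ ∪ m`, so `t_{ℓ ⊕ m} = t_ℓ + t_m`, and the relations of that plane give `[t_ℓ, t_m] = 0`. -/

open Submodule

section HolonomySum

variable {K E A : Type*} [Field K] [AddCommGroup E] [Module K E] [Ring A]

theorem span_pair_eq_of_mem_of_notMem {x y z : E} (hz : z ∈ span K {x, y})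
    (hzx : z ∉ span K {x}) : span K {x, z} = span K {x, y} := by
  obtain ⟨a, b, hab⟩ := mem_span_pair.1 hz
  have hb : b ≠ 0 := by
    rintro rfl
    exact hzx (by simpa [← hab] using smul_mem _ a (mem_span_singleton_self x))
  have hxxz : x ∈ span K {x, z} := subset_span (by simp)
  have hy : y = b⁻¹ • (z - a • x) := by
    rw [← hab, add_sub_cancel_left, smul_smul, inv_mul_cancel₀ hb, one_smul]
  refine le_antisymm (span_le.2 (Set.pair_subset (subset_span (by simp)) hz))
    (span_le.2 (Set.pair_subset hxxz ?_))
  rw [SetLike.mem_coe, hy]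
  exact smul_mem _ _ (sub_mem (subset_span (by simp)) (smul_mem _ _ hxxz))

theorem finrank_span_pair_eq_two {x y : E} (hx : x ≠ 0) (hy : y ∉ span K {x}) :
    Module.finrank K (span K {x, y}) = 2 := by
  have hxy : x ≠ y := fun h => hy (h ▸ mem_span_singleton_self x)
  have hind : LinearIndepOn K id {x, y} := linearIndepOn_id_pair hx fun a ha =>
    hy (mem_span_singleton.2 ⟨a, ha⟩)
  rw [finrank_span_set_eq_card hind, Set.toFinset_insert, Set.toFinset_singleton,
    Finset.card_pair hxy]

theorem span_singleton_eq_of_mem {x z : E} (hz : z ≠ 0) (hzx : z ∈ span K {x}) :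
    span K {z} = span K {x} := by
  obtain ⟨a, rfl⟩ := mem_span_singleton.1 hzx
  exact span_singleton_smul_eq (IsUnit.mk0 a (by rintro rfl; simp at hz)) x

theorem mem_span_singleton_of_mem_span_pair {B C : Submodule K E} (hBC : Disjoint B C)
    {x y z : E} (hx : x ∈ B) (hy : y ∈ C) (hz : z ∈ span K {x, y}) (hzB : z ∈ B) :
    z ∈ span K {x} := by
  obtain ⟨a, b, rfl⟩ := mem_span_pair.1 hz
  have hby : b • y = 0 := disjoint_def.1 hBC _
    (by simpa using sub_mem hzB (smul_mem _ a hx)) (smul_mem _ b hy)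
  rw [hby, add_zero]
  exact smul_mem _ a (mem_span_singleton_self x)

noncomputable def holonomySum (X : Finset E) (t : E → A) (U : Submodule K E) : A :=
  ∑ x ∈ X.filter (· ∈ U), t x

variable (K) in
def HolonomyRelations (X : Finset E) (t : E → A) : Prop :=
  ∀ U : Submodule K E, Module.finrank K U = 2 → U = span K {x | x ∈ X ∧ x ∈ U} →
    ∀ x ∈ X, x ∈ U → Commute (t x) (holonomySum X t U)

variable {X : Finset E}

theorem holonomySum_eq_add_sum_filter_notMem (t : E → A) {W U : Submodule K E} (hWU : W ≤ U) :
    holonomySum X t U = holonomySum X t W + ∑ y ∈ X.filter (fun y => y ∈ U ∧ y ∉ W), t y := by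
  rw [holonomySum, ← Finset.sum_filter_add_sum_filter_not _ (· ∈ W), Finset.filter_filter,
    Finset.filter_filter, holonomySum]
  congr 2
  exact Finset.filter_congr fun y _ => ⟨And.right, fun hyW => ⟨hWU hyW, hyW⟩⟩

theorem holonomySum_eq_sum_lines (hX : 0 ∉ X) (t : E → A) (U : Submodule K E) :
    holonomySum X t U =
      ∑ L ∈ (X.filter (· ∈ U)).image (fun x => span K {x}), holonomySum X t L := by
  rw [holonomySum, ← Finset.sum_fiberwise_of_maps_to (g := fun x => span K {x})
    fun x hx => Finset.mem_image_of_mem (fun x => span K {x}) hx]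
  refine Finset.sum_congr rfl fun L hL => ?_
  obtain ⟨x, hx, rfl⟩ := Finset.mem_image.1 hL
  rw [Finset.filter_filter, holonomySum]
  congr 1
  refine Finset.filter_congr fun y hy => ⟨fun hyx => hyx.2 ▸ mem_span_singleton_self y,
    fun hyx => ?_⟩
  exact ⟨(span_singleton_le_iff_mem _ _).2 (Finset.mem_filter.1 hx).2 hyx,
    span_singleton_eq_of_mem (ne_of_mem_of_not_mem hy hX) hyx⟩

namespace HolonomyRelations

variable {t : E → A} (h : HolonomyRelations K X t)
include h

theorem commute_of_le_span_pair {x y : E} (hx : x ∈ X) (hy : y ∈ X) (hx0 : x ≠ 0)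
    (hxy : y ∉ span K {x}) {W : Submodule K E} (hW : W ≤ span K {x, y}) :
    Commute (holonomySum X t W) (holonomySum X t (span K {x, y})) := by
  have hspan : span K {x, y} = span K {z | z ∈ X ∧ z ∈ span K {x, y}} :=
    le_antisymm
      (span_mono (Set.pair_subset ⟨hx, subset_span (by simp)⟩ ⟨hy, subset_span (by simp)⟩))
      (span_le.2 fun z hz => hz.2)
  refine Commute.sum_left _ _ _ fun w hw => ?_
  rw [Finset.mem_filter] at hw
  exact h _ (finrank_span_pair_eq_two hx0 hxy) hspan w hw.1 (hW hw.2)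

theorem commute_span_singleton (hX : 0 ∉ X) {x : E} (hx : x ∈ X) {U : Submodule K E}
    (hxU : x ∈ U) : Commute (holonomySum X t (span K {x})) (holonomySum X t U) := by
  have hLU : span K {x} ≤ U := (span_singleton_le_iff_mem _ _).2 hxU
  rw [holonomySum_eq_add_sum_filter_notMem t hLU,
    ← Finset.sum_fiberwise_of_maps_to (g := fun y => span K {x, y})
      fun y hy => Finset.mem_image_of_mem (fun y => span K {x, y}) hy]
  refine (Commute.refl _).add_right (Commute.sum_right _ _ _ fun P hP => ?_)
  obtain ⟨y, hy, rfl⟩ := Finset.mem_image.1 hP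
  obtain ⟨hyX, hyU, hyx⟩ := Finset.mem_filter.1 hy
  have hLP : span K {x} ≤ span K {x, y} := span_mono (by simp)
  have hfiber : (X.filter fun z => z ∈ U ∧ z ∉ span K {x}).filter
      (fun z => span K {x, z} = span K {x, y}) =
      X.filter fun z => z ∈ span K {x, y} ∧ z ∉ span K {x} := by
    rw [Finset.filter_filter]
    refine Finset.filter_congr fun z _ => ⟨fun hz => ⟨hz.2 ▸ subset_span (by simp), hz.1.2⟩,
      fun hz => ⟨⟨?_, hz.2⟩, span_pair_eq_of_mem_of_notMem hz.1 hz.2⟩⟩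
    exact span_le.2 (Set.pair_subset hxU hyU) hz.1
  rw [hfiber, eq_sub_of_add_eq' (holonomySum_eq_add_sum_filter_notMem t hLP).symm]
  exact (h.commute_of_le_span_pair hx hyX (ne_of_mem_of_not_mem hx hX) hyx hLP).sub_right
    (Commute.refl _)

theorem commute_of_le (hX : 0 ∉ X) {B C : Submodule K E} (hBC : B ≤ C) :
    Commute (holonomySum X t B) (holonomySum X t C) := by
  rw [holonomySum_eq_sum_lines hX t B]
  refine Commute.sum_left _ _ _ fun L hL => ?_
  obtain ⟨x, hx, rfl⟩ := Finset.mem_image.1 hL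
  rw [Finset.mem_filter] at hx
  exact h.commute_span_singleton hX hx.1 (hBC hx.2)

theorem commute_span_singleton_of_forall_mem_span_pair (hX : 0 ∉ X) {x y : E} (hx : x ∈ X)
    (hy : y ∈ X) (hxy : y ∉ span K {x})
    (hP : ∀ z ∈ X, z ∈ span K {x, y} → z ∈ span K {x} ∨ z ∈ span K {y}) :
    Commute (holonomySum X t (span K {x})) (holonomySum X t (span K {y})) := by
  have hLP : span K {x} ≤ span K {x, y} := span_mono (by simp)
  have hdisj : Disjoint (span K {x}) (span K {y}) :=
    (disjoint_span_singleton' (ne_of_mem_of_not_mem hy hX)).2 hxy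
  have hsplit : holonomySum X t (span K {x, y}) =
      holonomySum X t (span K {x}) + holonomySum X t (span K {y}) := by
    rw [holonomySum_eq_add_sum_filter_notMem t hLP, holonomySum]
    congr 2
    refine Finset.filter_congr fun z hz => ⟨fun hzP => (hP z hz hzP.1).resolve_left hzP.2,
      fun hzy => ⟨span_mono (by simp) hzy, fun hzx => ?_⟩⟩
    exact ne_of_mem_of_not_mem hz hX (disjoint_def.1 hdisj z hzx hzy)
  have hcomm := h.commute_of_le_span_pair hx hy (ne_of_mem_of_not_mem hx hX) hxy hLP
  rw [hsplit] at hcomm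
  simpa using hcomm.sub_right (Commute.refl _)

theorem commute_of_forall_mem_span_pair (hX : 0 ∉ X) {B C : Submodule K E}
    (hBC : ∀ x ∈ X, x ∈ B → ∀ y ∈ X, y ∈ C → y ∉ span K {x} ∧
      ∀ z ∈ X, z ∈ span K {x, y} → z ∈ span K {x} ∨ z ∈ span K {y}) :
    Commute (holonomySum X t B) (holonomySum X t C) := by
  rw [holonomySum_eq_sum_lines hX t B, holonomySum_eq_sum_lines hX t C]
  refine Commute.sum_left _ _ _ fun L hL => Commute.sum_right _ _ _ fun M hM => ?_
  obtain ⟨x, hx, rfl⟩ := Finset.mem_image.1 hL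
  obtain ⟨y, hy, rfl⟩ := Finset.mem_image.1 hM
  rw [Finset.mem_filter] at hx hy
  obtain ⟨hxy, hP⟩ := hBC x hx.1 hx.2 y hy.1 hy.2
  exact h.commute_span_singleton_of_forall_mem_span_pair hX hx.1 hy.1 hxy hP

end HolonomyRelations

end HolonomySum

theorem exists_mem_of_isDecomp {V : Type*} [AddCommGroup V] [Module ℂ V]
    {X : Finset (Module.Dual ℂ V)} (hX : 0 ∉ X) {U : Submodule ℂ (Module.Dual ℂ V)} {k : ℕ}
    {Us : Fin k → Submodule ℂ (Module.Dual ℂ V)} (hU : IsDecomp X U Us)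
    {z : Module.Dual ℂ V} (hz : z ∈ X) (hzU : z ∈ U) : ∃ i, z ∈ Us i := by
  by_contra! hzUs
  have hz0 : z ≠ 0 := ne_of_mem_of_not_mem hz hX
  obtain ⟨-, hline, -⟩ := hU.2.2 (span ℂ {z}) ⟨{z}, by simpa using hz, by simp⟩
    (by simpa using hz0) ((span_singleton_le_iff_mem _ _).2 hzU)
  have hbot : ∀ i, span ℂ {z} ⊓ Us i = ⊥ := fun i =>
    disjoint_iff.1 ((disjoint_span_singleton' hz0).2 (hzUs i)).symm
  simp only [hbot, iSup_bot, span_singleton_eq_bot] at hline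
  exact hz0 hline

theorem forall_mem_span_pair_of_isDecomp {V : Type*} [AddCommGroup V] [Module ℂ V]
    {X : Finset (Module.Dual ℂ V)} (hX : 0 ∉ X) {B C : Submodule ℂ (Module.Dual ℂ V)}
    (hBC : Disjoint B C) (hdec : IsDecomp X (B ⊔ C) ![B, C]) :
    ∀ x ∈ X, x ∈ B → ∀ y ∈ X, y ∈ C → y ∉ span ℂ {x} ∧
      ∀ z ∈ X, z ∈ span ℂ {x, y} → z ∈ span ℂ {x} ∨ z ∈ span ℂ {y} := by
  intro x _ hxB y hy hyC
  refine ⟨fun hyx => ne_of_mem_of_not_mem hy hX (disjoint_def.1 hBC y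
    ((span_singleton_le_iff_mem _ _).2 hxB hyx) hyC), fun z hz hzP => ?_⟩
  have hzBC : z ∈ B ⊔ C := span_le.2 (Set.pair_subset (mem_sup_left hxB) (mem_sup_right hyC)) hzP
  obtain ⟨i, hi⟩ := exists_mem_of_isDecomp hX hdec hz hzBC
  fin_cases i
  · exact .inl (mem_span_singleton_of_mem_span_pair hBC hxB hyC hzP hi)
  · exact .inr (mem_span_singleton_of_mem_span_pair hBC.symm hyC hxB
      (Set.pair_comm x y ▸ hzP) hi)

theorem stmt3_general {V : Type*} [AddCommGroup V] [Module ℂ V]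
    (X : Finset (Module.Dual ℂ V)) (hX : (0 : Module.Dual ℂ V) ∉ X)
    {A : Type*} [Ring A] (t : Module.Dual ℂ V → A)
    (hrel : ∀ U : Submodule ℂ (Module.Dual ℂ V), Module.finrank ℂ U = 2 →
      U = Submodule.span ℂ {x : Module.Dual ℂ V | x ∈ X ∧ x ∈ U} →
      ∀ x ∈ X, x ∈ U →
        Commute (t x) (∑ y ∈ X.filter (fun y => y ∈ U), t y))
    (B C : Submodule ℂ (Module.Dual ℂ V))
    (hnested : B ≤ C ∨ C ≤ B ∨
      (Disjoint B C ∧ IsDecomp X (B ⊔ C) ![B, C])) :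
    Commute (∑ x ∈ X.filter (fun x => x ∈ B), t x)
      (∑ x ∈ X.filter (fun x => x ∈ C), t x) := by
  have h : HolonomyRelations ℂ X t := hrel
  rcases hnested with hBC | hCB | ⟨hdisj, hdec⟩
  · exact h.commute_of_le hX hBC
  · exact (h.commute_of_le hX hCB).symm
  · exact h.commute_of_forall_mem_span_pair hX (forall_mem_span_pair_of_isDecomp hX hdisj hdec)

/-- In the holonomy algebra of the arrangement defined by `X` (formalised
via the universal property: any algebra `A` with elements `t x` satisfying the flatness
relations `[t_x, ∑_{y ∈ X ∩ U} t_y] = 0` for every two-dimensional `U` spanned by elements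
of `X`), the elements `t_B = ∑_{x ∈ X ∩ B} t_x` and `t_C` commute whenever `B`, `C` are
irreducible elements of the lattice forming a nested pair. -/
theorem stmt3 {V : Type*} [AddCommGroup V] [Module ℂ V] [FiniteDimensional ℂ V]
    (X : Finset (Module.Dual ℂ V)) (hX : (0 : Module.Dual ℂ V) ∉ X)
    {A : Type*} [Ring A] (t : Module.Dual ℂ V → A)
    (hrel : ∀ U : Submodule ℂ (Module.Dual ℂ V), Module.finrank ℂ U = 2 →
      U = Submodule.span ℂ {x : Module.Dual ℂ V | x ∈ X ∧ x ∈ U} →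
      ∀ x ∈ X, x ∈ U →
        Commute (t x) (∑ y ∈ X.filter (fun y => y ∈ U), t y))
    (B C : Submodule ℂ (Module.Dual ℂ V)) (hB : Irred X B) (hC : Irred X C)
    (hnested : B ≤ C ∨ C ≤ B ∨
      (Disjoint B C ∧ IsDecomp X (B ⊔ C) ![B, C])) :
    Commute (∑ x ∈ X.filter (fun x => x ∈ B), t x)
      (∑ x ∈ X.filter (fun x => x ∈ C), t x) :=
  stmt3_general X hX t hrel B C hnested
end

section
/- With the shuffle number s as above, if β and γ are disjoint subsets of a finite totally ordered set α, then (-1)^{s(β;α) - s(β; α\γ)} = (-1)^{|β|·|γ|} · (-1)^{s(γ;α) - s(γ; α\β)}. -/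
/-- The shuffle number `s(β;α)` of a subset `β` of a finite totally ordered set `α`:
the number of pairs `(b, a)` with `b ∈ β`, `a ∈ α \ β` and `a < b`. -/
def shuffle {ι : Type*} [LinearOrder ι] [DecidableEq ι] (β α : Finset ι) : ℕ :=
  ((β ×ˢ (α \ β)).filter fun p => p.2 < p.1).card

/-!
The difference `s(β;α) - s(β;α\γ)` counts the pairs `(b, g) ∈ β × γ` with `g < b`, and
`s(γ;α) - s(γ;α\β)` counts those with `b < g`. As `β` and `γ` are disjoint, every pair of
`β × γ` is of exactly one of the two kinds, so the two exponents add up to `|β|·|γ|`.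
-/

open Finset

namespace Finset

variable {ι : Type*} [LinearOrder ι]

def inversions (s t : Finset ι) : ℕ :=
  #{p ∈ s ×ˢ t | p.2 < p.1}

lemma inversions_union_right [DecidableEq ι] (s : Finset ι) {t u : Finset ι}
    (htu : Disjoint t u) : inversions s (t ∪ u) = inversions s t + inversions s u := by
  rw [inversions, product_union, filter_union, card_union_of_disjoint]
  · rfl
  · exact disjoint_filter_filter (disjoint_product.mpr (Or.inr htu))

lemma inversions_add_inversions {s t : Finset ι} (hst : Disjoint s t) :
    inversions s t + inversions t s = #s * #t := by
  have hswap : inversions t s = #{p ∈ s ×ˢ t | p.1 < p.2} :=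
    card_equiv (Equiv.prodComm ι ι) fun p => by simp [and_comm]
  have hcompl : {p ∈ s ×ˢ t | p.1 < p.2} = {p ∈ s ×ˢ t | ¬p.2 < p.1} := by
    refine filter_congr fun p hp => ?_
    have hne : p.1 ≠ p.2 :=
      disjoint_iff_ne.mp hst _ (mem_product.mp hp).1 _ (mem_product.mp hp).2
    rw [not_lt]
    exact ⟨le_of_lt, (·.lt_of_ne hne)⟩
  rw [hswap, hcompl, inversions, card_filter_add_card_filter_not, card_product]

end Finset

section Shuffle

variable {ι : Type*} [LinearOrder ι] [DecidableEq ι]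

lemma shuffle_eq_inversions (β α : Finset ι) : shuffle β α = inversions β (α \ β) := rfl

lemma shuffle_sub_shuffle_sdiff {α β γ : Finset ι} (hγ : γ ⊆ α) (hd : Disjoint β γ) :
    shuffle β α - shuffle β (α \ γ) = inversions β γ := by
  have hsplit : α \ β = (α \ γ) \ β ∪ γ := by
    ext x
    simp only [mem_sdiff, mem_union]
    by_cases hx : x ∈ γ
    · simp [hx, hγ hx, disjoint_right.mp hd hx]
    · simp [hx]
  have hdisj : Disjoint ((α \ γ) \ β) γ := sdiff_disjoint.mono_left sdiff_subset
  rw [shuffle_eq_inversions, shuffle_eq_inversions, hsplit, inversions_union_right _ hdisj]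
  omega

end Shuffle

/-- For disjoint subsets `β, γ` of a finite totally ordered set `α`,
`(-1)^{s(β;α) - s(β;α\γ)} = (-1)^{|β|·|γ|} · (-1)^{s(γ;α) - s(γ;α\β)}`. -/
theorem stmt10 {ι : Type*} [LinearOrder ι] [DecidableEq ι]
    (α β γ : Finset ι) (hβ : β ⊆ α) (hγ : γ ⊆ α) (hd : Disjoint β γ) :
    ((-1 : ℤ)) ^ (shuffle β α - shuffle β (α \ γ)) =
      (-1 : ℤ) ^ (β.card * γ.card) * (-1 : ℤ) ^ (shuffle γ α - shuffle γ (α \ β)) := by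
  rw [shuffle_sub_shuffle_sdiff hγ hd, shuffle_sub_shuffle_sdiff hβ hd.symm,
    ← inversions_add_inversions hd, pow_add, mul_assoc, ← pow_add,
    Even.neg_one_pow ⟨_, rfl⟩, mul_one]
end

section
/- Let A be a complete topological algebra over C[[ħ]] and let a, b ∈ A be invertible elements such that a ≡ b mod ħ and a² = b². Then b = g a g^{-1}, where g = (b a^{-1})^{1/2} ∈ 1 + ħA is defined by the binomial power series applied to δ = b a^{-1} ∈ 1 + ħA. -/
/-!
Newton's iteration `s ↦ s + (δ - s²)/2`, started at `s = 1`, converges ħ-adically to a square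
root `g ∈ 1 + ħA` of `δ = b a⁻¹`. Square roots in `1 + ħA` are unique even though `A` is not
commutative: if `x² = y²`, then `d = x - y` satisfies `2d = (1 - x) d + d (1 - y)`, which puts `d`
in every `ħⁿA`. Since `a² = b²` gives `δ a δ = a`, the element `a g⁻¹ a⁻¹` is another square root
of `δ` in `1 + ħA`, hence equals `g`; so `a g⁻¹ = g a` and `g a g⁻¹ = g² a = b`.
-/

open Submodule

section SMulTop

variable {R A : Type*} [CommRing R] [Ring A] [Algebra R A] {I J : Ideal R} {x y : A}

theorem Submodule.mul_mem_mul_smul_top (hx : x ∈ I • (⊤ : Submodule R A))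
    (hy : y ∈ J • (⊤ : Submodule R A)) : x * y ∈ (I * J) • (⊤ : Submodule R A) := by
  refine smul_induction_on hx (fun r hr a _ ↦ ?_) fun x x' hx hx' ↦ by
    rw [add_mul]; exact add_mem hx hx'
  refine smul_induction_on hy (fun s hs b _ ↦ ?_) fun y y' hy hy' ↦ by
    rw [mul_add]; exact add_mem hy hy'
  rw [smul_mul_smul_comm]
  exact smul_mem_smul (Ideal.mul_mem_mul hr hs) trivial

theorem Submodule.mul_mem_pow_add_smul_top {m n : ℕ} (hx : x ∈ I ^ m • (⊤ : Submodule R A))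
    (hy : y ∈ I ^ n • (⊤ : Submodule R A)) : x * y ∈ I ^ (m + n) • (⊤ : Submodule R A) :=
  pow_add I m n ▸ mul_mem_mul_smul_top hx hy

theorem Submodule.mul_mem_smul_top_left (x : A) (hy : y ∈ I • (⊤ : Submodule R A)) :
    x * y ∈ I • (⊤ : Submodule R A) := by
  simpa using mul_mem_mul_smul_top (I := ⊤) (by simp) hy

theorem Submodule.mul_mem_smul_top_right (hx : x ∈ I • (⊤ : Submodule R A)) (y : A) :
    x * y ∈ I • (⊤ : Submodule R A) := by
  simpa using mul_mem_mul_smul_top (J := ⊤) hx (by simp)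

theorem Submodule.mem_span_singleton_smul_top {r : R} :
    x ∈ Ideal.span {r} • (⊤ : Submodule R A) ↔ ∃ c : A, x = r • c := by
  simp [ideal_span_singleton_smul, mem_smul_pointwise_iff_exists, eq_comm]

theorem Units.conj_inv_sub_one_mem {u : Aˣ} (a : Aˣ) (hu : (u : A) - 1 ∈ I • (⊤ : Submodule R A)) :
    ((a * u⁻¹ * a⁻¹ : Aˣ) : A) - 1 ∈ I • (⊤ : Submodule R A) := by
  have e : ((a * u⁻¹ * a⁻¹ : Aˣ) : A) - 1 = a * (u⁻¹ * -(u - 1 : A)) * (a⁻¹ : Aˣ) := by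
    simp [mul_sub, sub_mul, mul_assoc]
  rw [e]
  exact mul_mem_smul_top_right (mul_mem_smul_top_left _ (mul_mem_smul_top_left _ (neg_mem hu))) _

end SMulTop

theorem IsPrecomplete.exists_smodEq_of_smodEq_succ {R M : Type*} [CommRing R] [AddCommGroup M]
    [Module R M] {I : Ideal R} [IsPrecomplete I M] {f : ℕ → M}
    (hf : ∀ n, f n ≡ f (n + 1) [SMOD (I ^ n • ⊤ : Submodule R M)]) :
    ∃ L, ∀ n, f n ≡ L [SMOD (I ^ n • ⊤ : Submodule R M)] := by
  refine IsPrecomplete.prec inferInstance fun {m n} hmn ↦ ?_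
  induction n, hmn using Nat.le_induction with
  | base => rfl
  | succ n hmn ih => exact ih.trans ((hf n).mono (pow_smul_top_le I M hmn))

section SquareRoot

variable {R A : Type*} [CommRing R] [Ring A] [Algebra R A] [Invertible (2 : R)] {I : Ideal R}

theorem eq_of_mul_self_eq_of_sub_one_mem [IsHausdorff I A] {x y : A}
    (hx : x - 1 ∈ I • (⊤ : Submodule R A)) (hy : y - 1 ∈ I • (⊤ : Submodule R A))
    (h : x * x = y * y) : x = y := by
  have hxy : x - y = ⅟(2 : R) • ((1 - x) * (x - y) + (x - y) * (1 - y)) := by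
    have key : x - y = ⅟(2 : R) • ((1 - x) * (x - y) + (x - y) * (1 - y)) +
        ⅟(2 : R) • (x * x - y * y) := by
      simp only [sub_mul, mul_sub, smul_sub, smul_add, one_mul, mul_one]
      match_scalars <;> grind [invOf_two_add_invOf_two]
    rwa [h, sub_self, smul_zero, add_zero] at key
  have hx' : 1 - x ∈ I ^ 1 • (⊤ : Submodule R A) := by
    rw [pow_one, ← neg_sub]; exact neg_mem hx
  have hy' : 1 - y ∈ I ^ 1 • (⊤ : Submodule R A) := by
    rw [pow_one, ← neg_sub]; exact neg_mem hy
  have hmem : ∀ n, x - y ∈ I ^ n • (⊤ : Submodule R A) := by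
    intro n
    induction n with
    | zero => simp
    | succ n ih =>
      rw [hxy]
      refine smul_mem _ _ (add_mem ?_ ?_)
      · simpa [add_comm] using mul_mem_pow_add_smul_top hx' ih
      · exact mul_mem_pow_add_smul_top ih hy'
  exact IsHausdorff.eq_iff_smodEq.2 fun n ↦ SModEq.sub_mem.2 (hmem n)

variable (R) in
def sqrtApprox (δ : A) : ℕ → A
  | 0 => 1
  | n + 1 => sqrtApprox δ n + ⅟(2 : R) • (δ - sqrtApprox δ n * sqrtApprox δ n)

@[simp]
theorem sqrtApprox_zero (δ : A) : sqrtApprox R δ 0 = 1 := rfl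

theorem sqrtApprox_succ (δ : A) (n : ℕ) : sqrtApprox R δ (n + 1) =
    sqrtApprox R δ n + ⅟(2 : R) • (δ - sqrtApprox R δ n * sqrtApprox R δ n) := rfl

/-- The error `e = δ - s²` of the Newton step enters only in the symmetrized form
`(1 - s) e + e (1 - s)`, so no commutation between `δ` and `s` is needed. -/
theorem sub_mul_self_add_invOf_two_smul (δ s : A) :
    δ - (s + ⅟(2 : R) • (δ - s * s)) * (s + ⅟(2 : R) • (δ - s * s)) =
      ⅟(2 : R) • ((1 - s) * (δ - s * s) + (δ - s * s) * (1 - s)) -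
        (⅟(2 : R) * ⅟(2 : R)) • ((δ - s * s) * (δ - s * s)) := by
  simp only [add_mul, mul_add, sub_mul, mul_sub, smul_mul_assoc, mul_smul_comm, smul_smul,
    one_mul, mul_one, smul_sub, smul_add]
  match_scalars <;> grind [invOf_two_add_invOf_two]

variable {δ : A}

theorem sqrtApprox_mem (hδ : δ - 1 ∈ I • (⊤ : Submodule R A)) (n : ℕ) :
    sqrtApprox R δ n - 1 ∈ I • (⊤ : Submodule R A) ∧
      δ - sqrtApprox R δ n * sqrtApprox R δ n ∈ I ^ (n + 1) • (⊤ : Submodule R A) := by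
  induction n with
  | zero => simpa using hδ
  | succ n ih =>
    obtain ⟨hs, he⟩ := ih
    have hs' : 1 - sqrtApprox R δ n ∈ I ^ 1 • (⊤ : Submodule R A) := by
      rw [pow_one, ← neg_sub]; exact neg_mem hs
    constructor
    · rw [sqrtApprox_succ, add_sub_right_comm]
      exact add_mem hs (smul_mem _ _ (smul_mono_left (Ideal.pow_le_self n.succ_ne_zero) he))
    · rw [sqrtApprox_succ, sub_mul_self_add_invOf_two_smul]
      refine sub_mem (smul_mem _ _ (add_mem ?_ ?_)) (smul_mem _ _ ?_)
      · simpa [add_comm] using mul_mem_pow_add_smul_top hs' he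
      · exact mul_mem_pow_add_smul_top he hs'
      · exact pow_smul_top_le I A (by omega) (mul_mem_pow_add_smul_top he he)

theorem exists_mul_self_eq_of_sub_one_mem [IsAdicComplete I A]
    (hδ : δ - 1 ∈ I • (⊤ : Submodule R A)) :
    ∃ g : A, g - 1 ∈ I • (⊤ : Submodule R A) ∧ g * g = δ := by
  have hcauchy : ∀ n, sqrtApprox R δ n ≡ sqrtApprox R δ (n + 1)
      [SMOD (I ^ n • ⊤ : Submodule R A)] := fun n ↦ by
    rw [SModEq.sub_mem, sqrtApprox_succ, sub_add_cancel_left]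
    exact neg_mem (smul_mem _ _ (pow_smul_top_le I A n.le_succ (sqrtApprox_mem hδ n).2))
  obtain ⟨g, hg⟩ := IsPrecomplete.exists_smodEq_of_smodEq_succ hcauchy
  refine ⟨g, ?_, (IsHausdorff.eq_iff_smodEq (I := I)).2 fun n ↦ ?_⟩
  · rw [← sub_sub_sub_cancel_left 1 g (sqrtApprox R δ 1)]
    exact sub_mem (sqrtApprox_mem hδ 1).1 (by simpa using SModEq.sub_mem.1 (hg 1))
  · set s := sqrtApprox R δ n
    have hgs : g - s ∈ I ^ n • (⊤ : Submodule R A) := by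
      rw [← neg_sub]; exact neg_mem (SModEq.sub_mem.1 (hg n))
    have e : g * g - δ = (g - s) * g + s * (g - s) - (δ - s * s) := by noncomm_ring
    rw [SModEq.sub_mem, e]
    exact sub_mem (add_mem (mul_mem_smul_top_right hgs g) (mul_mem_smul_top_left s hgs))
      (pow_smul_top_le I A n.le_succ (sqrtApprox_mem hδ n).2)

end SquareRoot

theorem conj_inv_mul_self_eq {G : Type*} [Group G] {a b u : G} (hab : a * a = b * b)
    (hu : u * u = b * a⁻¹) : (a * u⁻¹ * a⁻¹) * (a * u⁻¹ * a⁻¹) = u * u :=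
  calc (a * u⁻¹ * a⁻¹) * (a * u⁻¹ * a⁻¹) = a * (u * u)⁻¹ * a⁻¹ := by group
    _ = a * a * b⁻¹ * a⁻¹ := by rw [hu]; group
    _ = u * u := by rw [hab, hu]; group

open PowerSeries in
/-- Let `A` be a complete topological algebra over `ℂ[[ħ]]` (ħ-adically
complete and separated), and let `a`, `b` be invertible elements of `A` with `a ≡ b mod ħ`
and `a² = b²`. Then `b = g a g⁻¹`, where `g = (b a⁻¹)^{1/2} ∈ 1 + ħA` is a square root of
`b a⁻¹` congruent to `1` mod `ħ`. -/
theorem stmt12 {A : Type*} [Ring A] [Algebra (PowerSeries ℂ) A]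
    [IsAdicComplete (Ideal.span {(PowerSeries.X : PowerSeries ℂ)}) A]
    (a b : Aˣ)
    (hmod : ∃ c : A, (b : A) - (a : A) = (PowerSeries.X : PowerSeries ℂ) • c)
    (hsq : (a : A) * a = (b : A) * b) :
    ∃ g : Aˣ,
      (∃ c : A, (g : A) - 1 = (PowerSeries.X : PowerSeries ℂ) • c) ∧
      (g : A) * g * a = (b : A) ∧
      (b : A) = g * a * (g⁻¹ : Aˣ) := by
  let _ : Invertible (2 : ℂ⟦X⟧) := (Invertible.map C 2).copy 2 (map_ofNat C 2).symm
  obtain ⟨c, hc⟩ := hmod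
  have hδ : ((b * a⁻¹ : Aˣ) : A) - 1 ∈ Ideal.span {(X : ℂ⟦X⟧)} • (⊤ : Submodule ℂ⟦X⟧ A) :=
    mem_span_singleton_smul_top.2 ⟨c * a⁻¹, by
      rw [Units.val_mul, ← smul_mul_assoc, ← hc, sub_mul, Units.mul_inv]⟩
  obtain ⟨g, hg1, hgg⟩ := exists_mul_self_eq_of_sub_one_mem hδ
  have hg : IsUnit (g * g) := hgg ▸ (b * a⁻¹).isUnit
  obtain ⟨u, rfl⟩ := ((Commute.refl g).isUnit_mul_iff.1 hg).1
  have hu : u * u = b * a⁻¹ := Units.ext hgg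
  have hk : a * u⁻¹ * a⁻¹ = u := Units.ext <|
      eq_of_mul_self_eq_of_sub_one_mem (Units.conj_inv_sub_one_mem a hg1) hg1 <| by
    rw [← Units.val_mul, conj_inv_mul_self_eq (Units.ext hsq) hu, Units.val_mul]
  refine ⟨u, mem_span_singleton_smul_top.1 hg1, by simp [hgg], ?_⟩
  calc (b : A) = ((u * (a * u⁻¹ * a⁻¹) * a : Aˣ) : A) := by
        rw [hk, hu, inv_mul_cancel_right]
    _ = ((u * a * u⁻¹ : Aˣ) : A) := by congr 1; group
    _ = u * a * (u⁻¹ : Aˣ) := by rw [Units.val_mul, Units.val_mul]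
end

section
/- Let A be a D-algebra over a commutative ring k and M a D-bimodule over A. Then the Dynkin differential d_D on Dynkin cochains satisfies d_D ∘ d_D = 0, so (CD^*(A;M), d_D) is a cochain complex. -/
open scoped Classical

section Dynkin

variable {V : Type*} [Fintype V] [DecidableEq V] {M : Type*} [AddCommGroup M]

/-- `compVal Gr m B v rest` is the value of the cochain `m` on the connected component of
`B \ {v}` containing all the vertices of `rest`, and `0` if no such component exists. -/
noncomputable def compVal (Gr : SimpleGraph V) {p : ℕ}
    (m : Finset V → (Fin p → V) → M) (B : Finset V) (v : V) (rest : Fin p → V) : M :=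
  if h : ∃ C : Finset V, IsCC Gr (B.erase v) C ∧ ∀ j, rest j ∈ C then
    m h.choose rest
  else 0

/-- The Dynkin differential in positive degrees:
`(d m)_{(B;α)} = ∑ᵢ (-1)^{i-1} ( m_{(B; α∖αᵢ)} - m_{(conn. comp. of B∖αᵢ containing α∖αᵢ; α∖αᵢ)} )`. -/
noncomputable def dynD (Gr : SimpleGraph V) {p : ℕ}
    (m : Finset V → (Fin p → V) → M) : Finset V → (Fin (p + 1) → V) → M :=
  fun B α => ∑ i : Fin (p + 1),
    ((-1 : ℤ) ^ (i : ℕ)) •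
      (m B (fun j => α (i.succAbove j)) -
        compVal Gr m B (α i) (fun j => α (i.succAbove j)))

/-- The set of connected components of (the induced subgraph on) `S`. -/
noncomputable def ccomps (Gr : SimpleGraph V) (S : Finset V) : Finset (Finset V) :=
  S.powerset.filter (IsCC Gr S)

/-- The Dynkin differential in degree 0:
`(d m)_{(B;α)} = m_B - ∑_{B' comp. of B∖α} m_{B'}`. -/
noncomputable def dynD0 (Gr : SimpleGraph V) (m : Finset V → M) :
    Finset V → (Fin 1 → V) → M :=
  fun B α => m B - ∑ C ∈ ccomps Gr (B.erase (α 0)), m C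

end Dynkin

/-!
Write `r_v m` for the cochain whose value at `(B; ρ)` is `m` on the connected component of
`B ∖ v` containing `ρ` (and `0` if there is none), so that
`d m (B; α) = ∑ᵢ (-1)ⁱ ((1 - r_{αᵢ}) m)(B; α ∖ αᵢ)`. Inside a component `C` of `B ∖ u`,
deleting a vertex `w` of `C` produces the same components as deleting it from `B ∖ u`, and
`(B ∖ u) ∖ w = (B ∖ w) ∖ u`. Hence `d (d m) (B; α)` is an alternating double sum
`∑ᵢ ∑ⱼ (-1)^(i+j) W i j` whose terms depend only on the unordered pair of deleted vertices, and
the involution `(i, j) ↦ (i.succAbove j, j.predAbove i)` cancels them in pairs. In degree `0`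
the same cancellation comes from the fact that deleting `w` from `S` replaces the component
`C₀ ∋ w` of `S` by the components of `C₀ ∖ w`.
-/

namespace Fin

theorem sum_neg_one_pow_smul_sum_eq_zero {N : Type*} [AddCommGroup N] {n : ℕ}
    (W : Fin (n + 2) → Fin (n + 1) → N)
    (hW : ∀ i j, W (i.succAbove j) (j.predAbove i) = W i j) :
    ∑ i : Fin (n + 2), (-1 : ℤ) ^ (i : ℕ) • ∑ j : Fin (n + 1), (-1 : ℤ) ^ (j : ℕ) • W i j = 0 := by
  simp_rw [Finset.smul_sum, smul_smul, ← pow_add, ← Finset.sum_product']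
  refine Finset.sum_ninvolution (fun ij => (ij.1.succAbove ij.2, ij.2.predAbove ij.1))
    (fun ij => ?_) (fun ij _ h => succAbove_ne ij.1 ij.2 congr($h.1)) (fun _ => by simp)
    (fun ij => Prod.ext (succAbove_succAbove_predAbove ..) (predAbove_predAbove_succAbove ..))
  rw [hW, neg_one_pow_succAbove_add_predAbove, neg_smul, add_neg_cancel]

end Fin

section Components

variable {V : Type*} {Gr : SimpleGraph V}

theorem Conn.nonempty {B : Finset V} (h : Conn Gr B) : B.Nonempty := by
  obtain ⟨⟨x, hx⟩⟩ := SimpleGraph.Connected.nonempty h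
  exact ⟨x, hx⟩

theorem conn_singleton (v : V) : Conn Gr {v} := by
  rw [Conn, Finset.coe_singleton, SimpleGraph.induce_singleton_eq_top]
  exact SimpleGraph.connected_top

theorem mem_ccomps {S C : Finset V} : C ∈ ccomps Gr S ↔ IsCC Gr S C := by
  simp only [ccomps, Finset.mem_filter, Finset.mem_powerset, and_iff_right_iff_imp]
  exact fun h => h.1

variable [DecidableEq V]

theorem Conn.union {B C : Finset V} (hB : Conn Gr B) (hC : Conn Gr C) (h : (B ∩ C).Nonempty) :
    Conn Gr (B ∪ C) := by
  rw [Conn, Finset.coe_union]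
  exact SimpleGraph.induce_union_connected hB.preconnected hC.preconnected
    (by exact_mod_cast h)

theorem exists_isCC_superset {S T : Finset V} (hT : Conn Gr T) (hTS : T ⊆ S) :
    ∃ C, IsCC Gr S C ∧ T ⊆ C := by
  obtain ⟨C, hC, hmax⟩ := (S.powerset.filter fun C => T ⊆ C ∧ Conn Gr C).exists_maximal
    ⟨T, by simp [hTS, hT]⟩
  simp only [Finset.mem_filter, Finset.mem_powerset] at hC hmax
  exact ⟨C, ⟨hC.1, hC.2.2, fun C' hCC' hC'S hC' =>
    (hmax ⟨hC'S, hC.2.1.trans hCC', hC'⟩ hCC').antisymm hCC'⟩, hC.2.1⟩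

namespace IsCC

variable {S C : Finset V}

theorem subset_of_conn (hC : IsCC Gr S C) {E : Finset V} (hE : Conn Gr E) (hES : E ⊆ S)
    (hmeet : (E ∩ C).Nonempty) : E ⊆ C := by
  rw [← hC.2.2 _ Finset.subset_union_right (Finset.union_subset hES hC.1)
    (hE.union hC.2.1 hmeet)]
  exact Finset.subset_union_left

theorem eq_of_inter_nonempty (hC : IsCC Gr S C) {C' : Finset V} (hC' : IsCC Gr S C')
    (hmeet : (C ∩ C').Nonempty) : C = C' :=
  (hC'.subset_of_conn hC.2.1 hC.1 hmeet).antisymm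
    (hC.subset_of_conn hC'.2.1 hC'.1 (Finset.inter_comm C C' ▸ hmeet))

theorem erase_of_notMem (hC : IsCC Gr S C) {w : V} (hw : w ∉ C) : IsCC Gr (S.erase w) C :=
  ⟨fun _ hx => Finset.mem_erase.2 ⟨fun e => hw (e ▸ hx), hC.1 hx⟩, hC.2.1,
    fun C' h1 h2 h3 => hC.2.2 C' h1 (h2.trans (Finset.erase_subset _ _)) h3⟩

theorem trans_erase (hC : IsCC Gr S C) {w : V} {F : Finset V} (hF : IsCC Gr (C.erase w) F) :
    IsCC Gr (S.erase w) F := by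
  refine ⟨hF.1.trans (Finset.erase_subset_erase _ hC.1), hF.2.1, fun C' h1 h2 h3 => ?_⟩
  obtain ⟨x, hx⟩ := hF.2.1.nonempty
  have hC'C : C' ⊆ C := hC.subset_of_conn h3 (h2.trans (Finset.erase_subset _ _))
    ⟨x, Finset.mem_inter.2 ⟨h1 hx, Finset.erase_subset _ _ (hF.1 hx)⟩⟩
  exact hF.2.2 C' h1 (fun y hy => Finset.mem_erase.2 ⟨Finset.ne_of_mem_erase (h2 hy), hC'C hy⟩) h3

theorem of_erase (hC : IsCC Gr S C) {w : V} {E : Finset V} (hE : IsCC Gr (S.erase w) E)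
    (hEC : E ⊆ C) : IsCC Gr (C.erase w) E :=
  ⟨fun _ hx => Finset.mem_erase.2 ⟨Finset.ne_of_mem_erase (hE.1 hx), hEC hx⟩, hE.2.1,
    fun C' h1 h2 h3 => hE.2.2 C' h1 (h2.trans (Finset.erase_subset_erase _ hC.1)) h3⟩

end IsCC

theorem ccomps_erase {S C₀ : Finset V} (hC₀ : IsCC Gr S C₀) {w : V} (hw : w ∈ C₀) :
    ccomps Gr (S.erase w) = ccomps Gr (C₀.erase w) ∪ (ccomps Gr S).erase C₀ := by
  ext E
  simp only [Finset.mem_union, Finset.mem_erase, mem_ccomps]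
  constructor
  · intro hE
    obtain ⟨C, hC, hEC⟩ := exists_isCC_superset hE.2.1 (hE.1.trans (Finset.erase_subset _ _))
    by_cases hCC₀ : C = C₀
    · exact .inl (hC₀.of_erase hE (hCC₀ ▸ hEC))
    · have hwC : w ∉ C := fun hwC => hCC₀ (hC.eq_of_inter_nonempty hC₀ ⟨w, by simp [hwC, hw]⟩)
      obtain rfl : C = E := hE.2.2 C hEC
        (fun x hx => Finset.mem_erase.2 ⟨fun e => hwC (e ▸ hx), hC.1 hx⟩) hC.2.1
      exact .inr ⟨hCC₀, hC⟩
  · rintro (hE | ⟨hEC₀, hE⟩)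
    · exact hC₀.trans_erase hE
    · exact hE.erase_of_notMem fun hwE => hEC₀ (hE.eq_of_inter_nonempty hC₀ ⟨w, by simp [hwE, hw]⟩)

theorem disjoint_ccomps_erase {S C₀ : Finset V} (hC₀ : IsCC Gr S C₀) (w : V) :
    Disjoint (ccomps Gr (C₀.erase w)) ((ccomps Gr S).erase C₀) := by
  refine Finset.disjoint_left.2 fun E hE hE' => ?_
  rw [mem_ccomps] at hE
  obtain ⟨hEC₀, hE'⟩ := Finset.mem_erase.1 hE'
  obtain ⟨x, hx⟩ := hE.2.1.nonempty
  exact hEC₀ ((mem_ccomps.1 hE').eq_of_inter_nonempty hC₀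
    ⟨x, Finset.mem_inter.2 ⟨hx, Finset.erase_subset _ _ (hE.1 hx)⟩⟩)

theorem sum_ccomps_erase_add {M : Type*} [AddCommMonoid M] (f : Finset V → M) {S C₀ : Finset V}
    (hC₀ : IsCC Gr S C₀) {w : V} (hw : w ∈ C₀) :
    ∑ C ∈ ccomps Gr (S.erase w), f C + f C₀
      = ∑ C ∈ ccomps Gr (C₀.erase w), f C + ∑ C ∈ ccomps Gr S, f C := by
  rw [ccomps_erase hC₀ hw, Finset.sum_union (disjoint_ccomps_erase hC₀ w), add_assoc,
    Finset.sum_erase_add _ _ (mem_ccomps.2 hC₀)]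

end Components

section Cochains

variable {V : Type*} [Fintype V] [DecidableEq V] {Gr : SimpleGraph V} {M : Type*} [AddCommGroup M]

theorem compVal_eq_of_isCC {p : ℕ} [NeZero p] (m : Finset V → (Fin p → V) → M) {B C : Finset V}
    {v : V} {ρ : Fin p → V} (hC : IsCC Gr (B.erase v) C) (hρ : ∀ j, ρ j ∈ C) :
    compVal Gr m B v ρ = m C ρ := by
  have hex : ∃ C, IsCC Gr (B.erase v) C ∧ ∀ j, ρ j ∈ C := ⟨C, hC, hρ⟩
  rw [compVal, dif_pos hex,
    hex.choose_spec.1.eq_of_inter_nonempty hC ⟨ρ 0, by simp [hex.choose_spec.2 0, hρ 0]⟩]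

theorem compVal_eq_zero {p : ℕ} (m : Finset V → (Fin p → V) → M) {B : Finset V} {v : V}
    {ρ : Fin p → V} (h : ¬ ∃ C, IsCC Gr (B.erase v) C ∧ ∀ j, ρ j ∈ C) :
    compVal Gr m B v ρ = 0 :=
  dif_neg h

theorem compVal_sum {p : ℕ} {ι : Type*} (s : Finset ι) (f : ι → Finset V → (Fin p → V) → M)
    (B : Finset V) (v : V) (ρ : Fin p → V) :
    compVal Gr (fun S σ => ∑ i ∈ s, f i S σ) B v ρ = ∑ i ∈ s, compVal Gr (f i) B v ρ := by
  unfold compVal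
  split_ifs <;> simp

theorem compVal_zsmul {p : ℕ} (c : ℤ) (m : Finset V → (Fin p → V) → M) (B : Finset V) (v : V)
    (ρ : Fin p → V) : compVal Gr (fun S σ => c • m S σ) B v ρ = c • compVal Gr m B v ρ := by
  unfold compVal
  split_ifs <;> simp

theorem compVal_erase_comm {p : ℕ} (m : Finset V → (Fin p → V) → M) (B : Finset V) (u w : V)
    (ρ : Fin p → V) : compVal Gr m (B.erase u) w ρ = compVal Gr m (B.erase w) u ρ := by
  unfold compVal
  rw [Finset.erase_right_comm]

theorem compVal_of_isCC {p : ℕ} [NeZero p] (m : Finset V → (Fin p → V) → M) {S C : Finset V}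
    (hC : IsCC Gr S C) (w : V) {ρ : Fin p → V} (hρ : ∀ j, ρ j ∈ C) :
    compVal Gr m C w ρ = compVal Gr m S w ρ := by
  by_cases hE : ∃ E, IsCC Gr (C.erase w) E ∧ ∀ j, ρ j ∈ E
  · obtain ⟨E, hE, hρE⟩ := hE
    rw [compVal_eq_of_isCC m hE hρE, compVal_eq_of_isCC m (hC.trans_erase hE) hρE]
  · refine (compVal_eq_zero m hE).trans (compVal_eq_zero m ?_).symm
    rintro ⟨E, hE', hρE⟩
    have hEC : E ⊆ C := hC.subset_of_conn hE'.2.1 (hE'.1.trans (Finset.erase_subset _ _))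
      ⟨ρ 0, Finset.mem_inter.2 ⟨hρE 0, hρ 0⟩⟩
    exact hE ⟨E, hC.of_erase hE' hEC, hρE⟩

theorem dynD_apply {p : ℕ} (m : Finset V → (Fin p → V) → M) (B : Finset V)
    (α : Fin (p + 1) → V) :
    dynD Gr m B α = ∑ i : Fin (p + 1), (-1 : ℤ) ^ (i : ℕ) •
      (m B (i.removeNth α) - compVal Gr m B (α i) (i.removeNth α)) :=
  rfl

theorem compVal_sub_compVal_removeNth {q : ℕ} (m : Finset V → (Fin (q + 1) → V) → M)
    (B : Finset V) (u : V) (β : Fin (q + 2) → V) (j : Fin (q + 2)) :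
    compVal Gr (fun S σ => m S (j.removeNth σ) - compVal Gr m S (σ j) (j.removeNth σ)) B u β
      = compVal Gr m B u (j.removeNth β) - compVal Gr m (B.erase u) (β j) (j.removeNth β) := by
  by_cases hρ : ∃ C, IsCC Gr (B.erase u) C ∧ ∀ k, j.removeNth β k ∈ C
  · obtain ⟨C, hC, hρC⟩ := hρ
    rw [compVal_eq_of_isCC m hC hρC]
    by_cases hw : β j ∈ C
    · have hβC : ∀ k, β k ∈ C := (Fin.forall_iff_succAbove j).2 ⟨hw, hρC⟩
      rw [compVal_eq_of_isCC _ hC hβC, compVal_of_isCC m hC _ hρC]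
    · have hβ : ¬ ∃ C', IsCC Gr (B.erase u) C' ∧ ∀ k, β k ∈ C' := by
        rintro ⟨C', hC', hβC'⟩
        obtain rfl : C' = C := hC'.eq_of_inter_nonempty hC
          ⟨β (j.succAbove 0), Finset.mem_inter.2 ⟨hβC' _, hρC 0⟩⟩
        exact hw (hβC' j)
      rw [compVal_eq_zero _ hβ, compVal_eq_of_isCC m (hC.erase_of_notMem hw) hρC, sub_self]
  · have hβ : ¬ ∃ C, IsCC Gr (B.erase u) C ∧ ∀ k, β k ∈ C :=
      fun ⟨C, hC, hβC⟩ => hρ ⟨C, hC, fun k => hβC _⟩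
    have hρ' : ¬ ∃ E, IsCC Gr ((B.erase u).erase (β j)) E ∧ ∀ k, j.removeNth β k ∈ E := by
      rintro ⟨E, hE, hρE⟩
      obtain ⟨C, hC, hEC⟩ :=
        exists_isCC_superset hE.2.1 (hE.1.trans (Finset.erase_subset _ _))
      exact hρ ⟨C, hC, fun k => hEC (hρE k)⟩
    rw [compVal_eq_zero _ hβ, compVal_eq_zero m hρ, compVal_eq_zero m hρ', sub_zero]

theorem compVal_dynD {q : ℕ} (m : Finset V → (Fin (q + 1) → V) → M) (B : Finset V) (u : V)
    (β : Fin (q + 2) → V) :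
    compVal Gr (dynD Gr m) B u β = ∑ j : Fin (q + 2), (-1 : ℤ) ^ (j : ℕ) •
      (compVal Gr m B u (j.removeNth β) - compVal Gr m (B.erase u) (β j) (j.removeNth β)) := by
  unfold dynD
  rw [compVal_sum]
  refine Finset.sum_congr rfl fun j _ => ?_
  rw [compVal_zsmul, ← compVal_sub_compVal_removeNth]
  rfl

theorem dynD_dynD {p : ℕ} (m : Finset V → (Fin (p + 1) → V) → M) (B : Finset V)
    (α : Fin (p + 3) → V) : dynD Gr (dynD Gr m) B α = 0 := by
  let W : Fin (p + 3) → Fin (p + 2) → M := fun i j =>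
    m B (j.removeNth (i.removeNth α))
      - compVal Gr m B (α (i.succAbove j)) (j.removeNth (i.removeNth α))
      - compVal Gr m B (α i) (j.removeNth (i.removeNth α))
      + compVal Gr m (B.erase (α i)) (α (i.succAbove j)) (j.removeNth (i.removeNth α))
  have hW : ∀ i j, W (i.succAbove j) (j.predAbove i) = W i j := fun i j => by
    simp only [W, Fin.succAbove_succAbove_predAbove,
      ← Fin.removeNth_removeNth_eq_swap, compVal_erase_comm m B (α (i.succAbove j))]
    abel
  rw [dynD_apply]
  refine (Finset.sum_congr rfl fun i _ => ?_).trans (Fin.sum_neg_one_pow_smul_sum_eq_zero W hW)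
  rw [compVal_dynD, dynD_apply, ← Finset.sum_sub_distrib]
  refine congrArg _ (Finset.sum_congr rfl fun j _ => ?_)
  rw [← smul_sub, Fin.removeNth_apply]
  exact congrArg _ (sub_add ..).symm

theorem compVal_dynD0 (m₀ : Finset V → M) (B : Finset V) (u : V) (ρ : Fin 1 → V) :
    compVal Gr (dynD0 Gr m₀) B u ρ
      = ∑ C ∈ ccomps Gr (B.erase u), m₀ C - ∑ C ∈ ccomps Gr ((B.erase u).erase (ρ 0)), m₀ C := by
  by_cases h : ∃ C, IsCC Gr (B.erase u) C ∧ ∀ j, ρ j ∈ C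
  · obtain ⟨C, hC, hρC⟩ := h
    rw [compVal_eq_of_isCC _ hC hρC, dynD0, sub_eq_sub_iff_add_eq_add, add_comm,
      sum_ccomps_erase_add m₀ hC (hρC 0), add_comm]
  · have hw : ρ 0 ∉ B.erase u := fun hw => by
      obtain ⟨C, hC, hwC⟩ :=
        exists_isCC_superset (conn_singleton (Gr := Gr) (ρ 0)) (Finset.singleton_subset_iff.2 hw)
      exact h ⟨C, hC, fun j => Subsingleton.elim 0 j ▸ hwC (Finset.mem_singleton_self _)⟩
    rw [compVal_eq_zero _ h, Finset.erase_eq_of_notMem hw, sub_self]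

theorem dynD_dynD0 (m₀ : Finset V → M) (B : Finset V) (α : Fin 2 → V) :
    dynD Gr (dynD0 Gr m₀) B α = 0 := by
  have h01 : (0 : Fin 2).succAbove 0 = 1 := rfl
  have h10 : (1 : Fin 2).succAbove 0 = 0 := rfl
  rw [dynD_apply, Fin.sum_univ_two]
  simp only [compVal_dynD0, dynD0, Fin.removeNth_apply, h01, h10, Fin.val_zero, Fin.val_one,
    pow_zero, pow_one, one_smul, neg_smul, Finset.erase_right_comm (s := B) (a := α 1)]
  abel

end Cochains

theorem stmt13_general {V : Type*} [Fintype V] [DecidableEq V]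
    (Gr : SimpleGraph V)
    {M : Type*} [AddCommGroup M]
    (MB : Finset V → AddSubgroup M) :
    (∀ (p : ℕ) (m : Finset V → (Fin (p + 1) → V) → M),
      (∀ (B : Finset V) (α : Fin (p + 1) → V) (σ : Equiv.Perm (Fin (p + 1))),
        m B (α ∘ σ) = (Equiv.Perm.sign σ : ℤ) • m B α) →
      (∀ (B : Finset V) (α : Fin (p + 1) → V), Conn Gr B → (∀ i, α i ∈ B) →
        Function.Injective α → m B α ∈ MB B) →
      ∀ (B : Finset V) (α : Fin (p + 3) → V), Conn Gr B → (∀ i, α i ∈ B) →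
        Function.Injective α → dynD Gr (dynD Gr m) B α = 0) ∧
    (∀ m₀ : Finset V → M,
      (∀ B : Finset V, Conn Gr B → m₀ B ∈ MB B) →
      ∀ (B : Finset V) (α : Fin 2 → V), Conn Gr B → (∀ i, α i ∈ B) →
        Function.Injective α → dynD Gr (dynD0 Gr m₀) B α = 0) :=
  ⟨fun _ m _ _ B α _ _ _ => dynD_dynD m B α, fun m₀ _ B α _ _ _ => dynD_dynD0 m₀ B α⟩

/-- For a `D`-algebra `A` and a `D`-bimodule `M` over `A`, the Dynkin
differential squares to zero, so `(CD^*(A;M), d_D)` is a cochain complex: for any Dynkin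
cochain (antisymmetric, with components in the prescribed subgroups) the composite of two
differentials vanishes on every component, in positive degrees as well as starting from
degree 0. -/
theorem stmt13 {V : Type*} [Fintype V] [DecidableEq V]
    (Gr : SimpleGraph V) (hGr : Gr.Connected)
    {k A : Type*} [CommRing k] [Ring A] [Algebra k A]
    (AD : Finset V → Subalgebra k A)
    (hADmono : ∀ B C : Finset V, B ⊆ C → AD B ≤ AD C)
    (hADorth : ∀ B C : Finset V, Orth Gr B C → ∀ x ∈ AD B, ∀ y ∈ AD C, Commute x y)
    {M : Type*} [AddCommGroup M]
    (MB : Finset V → AddSubgroup M)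
    (hMBmono : ∀ B C : Finset V, B ⊆ C → MB B ≤ MB C) :
    (∀ (p : ℕ) (m : Finset V → (Fin (p + 1) → V) → M),
      (∀ (B : Finset V) (α : Fin (p + 1) → V) (σ : Equiv.Perm (Fin (p + 1))),
        m B (α ∘ σ) = (Equiv.Perm.sign σ : ℤ) • m B α) →
      (∀ (B : Finset V) (α : Fin (p + 1) → V), Conn Gr B → (∀ i, α i ∈ B) →
        Function.Injective α → m B α ∈ MB B) →
      ∀ (B : Finset V) (α : Fin (p + 3) → V), Conn Gr B → (∀ i, α i ∈ B) →
        Function.Injective α → dynD Gr (dynD Gr m) B α = 0) ∧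
    (∀ m₀ : Finset V → M,
      (∀ B : Finset V, Conn Gr B → m₀ B ∈ MB B) →
      ∀ (B : Finset V) (α : Fin 2 → V), Conn Gr B → (∀ i, α i ∈ B) →
        Function.Injective α → dynD Gr (dynD0 Gr m₀) B α = 0) :=
  stmt13_general Gr MB
end

section
/- Let g be a complex semisimple (or more generally, a finite-dimensional complex) Lie algebra with a fixed invariant symmetric tensor Ω ∈ g ⊗ g, R = exp(ħΩ) ∈ U(g)^{⊗2}[[ħ]], and let Φ = 1 + ħ²φ + O(ħ³) ∈ 1 + ħ²(U(g)^{⊗3}[[ħ]])^g satisfy the pentagon equation and the two hexagon equations with respect to the cocommutative coproduct and R, together with Φ^{-1} = Φ^{321}. Then the total antisymmetrization of the ħ²-coefficient satisfies Alt_3 φ = (1/6)[Ω_{12}, Ω_{23}]. -/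
open scoped TensorProduct

noncomputable section TensorSetup

variable (A : Type*) [Ring A] [Algebra ℂ A]

/-- Insertion `A⊗A → A⊗A⊗A` into slots 1,2: `x ⊗ y ↦ x ⊗ y ⊗ 1`. -/
def i12 : A ⊗[ℂ] A →ₐ[ℂ] (A ⊗[ℂ] A) ⊗[ℂ] A :=
  Algebra.TensorProduct.includeLeft

/-- Insertion into slots 2,3: `x ⊗ y ↦ 1 ⊗ x ⊗ y`. -/
def i23 : A ⊗[ℂ] A →ₐ[ℂ] (A ⊗[ℂ] A) ⊗[ℂ] A :=
  (Algebra.TensorProduct.assoc ℂ ℂ ℂ A A A).symm.toAlgHom.comp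
    Algebra.TensorProduct.includeRight

/-- Insertion into slots 1,3: `x ⊗ y ↦ x ⊗ 1 ⊗ y`. -/
def i13 : A ⊗[ℂ] A →ₐ[ℂ] (A ⊗[ℂ] A) ⊗[ℂ] A :=
  Algebra.TensorProduct.map Algebra.TensorProduct.includeLeft (AlgHom.id ℂ A)

/-- The permutation of `A⊗A⊗A` exchanging the first two factors. -/
def s12 : (A ⊗[ℂ] A) ⊗[ℂ] A ≃ₐ[ℂ] (A ⊗[ℂ] A) ⊗[ℂ] A :=
  Algebra.TensorProduct.congr (Algebra.TensorProduct.comm ℂ A A) AlgEquiv.refl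

/-- The permutation of `A⊗A⊗A` exchanging the last two factors. -/
def s23 : (A ⊗[ℂ] A) ⊗[ℂ] A ≃ₐ[ℂ] (A ⊗[ℂ] A) ⊗[ℂ] A :=
  (Algebra.TensorProduct.assoc ℂ ℂ ℂ A A A).trans
    ((Algebra.TensorProduct.congr AlgEquiv.refl (Algebra.TensorProduct.comm ℂ A A)).trans
      (Algebra.TensorProduct.assoc ℂ ℂ ℂ A A A).symm)

/-- The permutation of `A⊗A⊗A` exchanging the outer factors. -/
def s13 : (A ⊗[ℂ] A) ⊗[ℂ] A ≃ₐ[ℂ] (A ⊗[ℂ] A) ⊗[ℂ] A :=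
  ((s12 A).trans (s23 A)).trans (s12 A)

/-- `x ↦ x₍₃₁₂₎`, i.e. `a ⊗ b ⊗ c ↦ b ⊗ c ⊗ a`. -/
def p312 : (A ⊗[ℂ] A) ⊗[ℂ] A ≃ₐ[ℂ] (A ⊗[ℂ] A) ⊗[ℂ] A :=
  (s12 A).trans (s23 A)

/-- `x ↦ x₍₂₃₁₎`, i.e. `a ⊗ b ⊗ c ↦ c ⊗ a ⊗ b`. -/
def p231 : (A ⊗[ℂ] A) ⊗[ℂ] A ≃ₐ[ℂ] (A ⊗[ℂ] A) ⊗[ℂ] A :=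
  (s23 A).trans (s12 A)

variable {A} (Δ : A →ₐ[ℂ] A ⊗[ℂ] A)

/-- `Δ ⊗ id : A⊗A → A⊗A⊗A`. -/
def dio : A ⊗[ℂ] A →ₐ[ℂ] (A ⊗[ℂ] A) ⊗[ℂ] A :=
  Algebra.TensorProduct.map Δ (AlgHom.id ℂ A)

/-- `id ⊗ Δ : A⊗A → A⊗A⊗A`. -/
def iod : A ⊗[ℂ] A →ₐ[ℂ] (A ⊗[ℂ] A) ⊗[ℂ] A :=
  (Algebra.TensorProduct.assoc ℂ ℂ ℂ A A A).symm.toAlgHom.comp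
    (Algebra.TensorProduct.map (AlgHom.id ℂ A) Δ)

/-- `Δ ⊗ id ⊗ id : A⊗A⊗A → A⊗A⊗A⊗A`. -/
def q1 : (A ⊗[ℂ] A) ⊗[ℂ] A →ₐ[ℂ] ((A ⊗[ℂ] A) ⊗[ℂ] A) ⊗[ℂ] A :=
  Algebra.TensorProduct.map (dio Δ) (AlgHom.id ℂ A)

/-- `id ⊗ Δ ⊗ id : A⊗A⊗A → A⊗A⊗A⊗A`. -/
def q2 : (A ⊗[ℂ] A) ⊗[ℂ] A →ₐ[ℂ] ((A ⊗[ℂ] A) ⊗[ℂ] A) ⊗[ℂ] A :=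
  Algebra.TensorProduct.map (iod Δ) (AlgHom.id ℂ A)

/-- `id ⊗ id ⊗ Δ : A⊗A⊗A → A⊗A⊗A⊗A`. -/
def q3 : (A ⊗[ℂ] A) ⊗[ℂ] A →ₐ[ℂ] ((A ⊗[ℂ] A) ⊗[ℂ] A) ⊗[ℂ] A :=
  (Algebra.TensorProduct.assoc ℂ ℂ ℂ (A ⊗[ℂ] A) A A).symm.toAlgHom.comp
    (Algebra.TensorProduct.map (AlgHom.id ℂ (A ⊗[ℂ] A)) Δ)

variable (A)

/-- `x ↦ 1 ⊗ x : A⊗A → A⊗A⊗A`. -/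
def e0 : A ⊗[ℂ] A →ₐ[ℂ] (A ⊗[ℂ] A) ⊗[ℂ] A :=
  Algebra.TensorProduct.map Algebra.TensorProduct.includeRight (AlgHom.id ℂ A)

/-- `x ↦ x ⊗ 1 : A⊗A → A⊗A⊗A`. -/
def e3 : A ⊗[ℂ] A →ₐ[ℂ] (A ⊗[ℂ] A) ⊗[ℂ] A :=
  Algebra.TensorProduct.includeLeft

/-- `x ↦ 1 ⊗ x : A⊗A⊗A → A⊗A⊗A⊗A`. -/
def e1 : (A ⊗[ℂ] A) ⊗[ℂ] A →ₐ[ℂ] ((A ⊗[ℂ] A) ⊗[ℂ] A) ⊗[ℂ] A :=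
  Algebra.TensorProduct.map (e0 A) (AlgHom.id ℂ A)

/-- `x ↦ x ⊗ 1 : A⊗A⊗A → A⊗A⊗A⊗A`. -/
def e4 : (A ⊗[ℂ] A) ⊗[ℂ] A →ₐ[ℂ] ((A ⊗[ℂ] A) ⊗[ℂ] A) ⊗[ℂ] A :=
  Algebra.TensorProduct.includeLeft

variable {A}

/-- The iterated coproduct `Δ⁽³⁾ = (Δ ⊗ id) ∘ Δ : A → A⊗A⊗A`. -/
def Δ3 : A →ₐ[ℂ] (A ⊗[ℂ] A) ⊗[ℂ] A := (dio Δ).comp Δ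

/-- The formal exponential `exp(ħ x)`: the power series in `ħ` whose `n`-th coefficient
is `xⁿ / n!`. -/
def hexp {R : Type*} [Ring R] [Algebra ℂ R] (x : R) : PowerSeries R :=
  PowerSeries.mk fun n => ((n.factorial : ℂ)⁻¹) • x ^ n

/-- Apply an algebra map to a formal power series coefficientwise. -/
def psMap {R S : Type*} [Ring R] [Ring S] [Algebra ℂ R] [Algebra ℂ S]
    (f : R →ₐ[ℂ] S) : PowerSeries R →+* PowerSeries S :=
  PowerSeries.map f.toRingHom

end TensorSetup

/-! Compare the `ħ²`-coefficients of the two hexagon equations. Since `Φ ≡ 1 mod ħ²`, the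
inverse `Φ⁻¹` has `ħ²`-coefficient `-φ`, so `Φ⁻¹ = Φ₍₃₂₁₎` gives `φ₍₃₂₁₎ = -φ`. At order `ħ²` the
first hexagon reads `φ + φ₍₃₁₂₎ - φ₍₁₃₂₎ = ½[Ω₂₃, Ω₁₃]` and the second
`φ + φ₍₂₃₁₎ - φ₍₂₁₃₎ = ½[Ω₁₃, Ω₁₂]`. Centrality of `Ω₁₂ + Ω₁₃ + Ω₂₃` turns both brackets into
`½[Ω₁₂, Ω₂₃]`, and the sum of the two relations is `Alt₃ φ`. -/

namespace PowerSeries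

variable {R : Type*} [Ring R]

theorem coeff_zero_mul_eq (F G : PowerSeries R) : coeff 0 (F * G) = coeff 0 F * coeff 0 G := by
  simp [coeff_zero_eq_constantCoeff_apply]

theorem coeff_one_mul_eq (F G : PowerSeries R) :
    coeff 1 (F * G) = coeff 0 F * coeff 1 G + coeff 1 F * coeff 0 G := by
  rw [coeff_mul, Finset.Nat.sum_antidiagonal_eq_sum_range_succ_mk]
  simp [Finset.sum_range_succ]

theorem coeff_two_mul_eq (F G : PowerSeries R) :
    coeff 2 (F * G) =
      coeff 0 F * coeff 2 G + coeff 1 F * coeff 1 G + coeff 2 F * coeff 0 G := by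
  rw [coeff_mul, Finset.Nat.sum_antidiagonal_eq_sum_range_succ_mk]
  simp [Finset.sum_range_succ]

theorem coeff_inv_of_mul_eq_one {F G : PowerSeries R} (hFG : F * G = 1)
    (hF0 : coeff 0 F = 1) (hF1 : coeff 1 F = 0) :
    coeff 0 G = 1 ∧ coeff 1 G = 0 ∧ coeff 2 G = -coeff 2 F := by
  have h0 := congrArg (coeff 0) hFG
  have h1 := congrArg (coeff 1) hFG
  have h2 := congrArg (coeff 2) hFG
  rw [coeff_zero_mul_eq, hF0, one_mul, coeff_zero_one] at h0
  rw [coeff_one_mul_eq, hF0, hF1, h0, one_mul, zero_mul, add_zero, coeff_one,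
    if_neg one_ne_zero] at h1
  rw [coeff_two_mul_eq, hF0, hF1, h0, one_mul, zero_mul, mul_one, add_zero, coeff_one,
    if_neg two_ne_zero] at h2
  exact ⟨h0, h1, eq_neg_of_add_eq_zero_left h2⟩

theorem coeff_two_mul_five {P F Q G S : PowerSeries R}
    (hP0 : coeff 0 P = 1) (hP1 : coeff 1 P = 0) (hF0 : coeff 0 F = 1)
    (hQ0 : coeff 0 Q = 1) (hQ1 : coeff 1 Q = 0) (hG0 : coeff 0 G = 1)
    (hS0 : coeff 0 S = 1) (hS1 : coeff 1 S = 0) :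
    coeff 2 (P * F * Q * G * S) =
      coeff 2 P + coeff 2 F + coeff 2 Q + coeff 2 G + coeff 2 S + coeff 1 F * coeff 1 G := by
  simp only [coeff_two_mul_eq, coeff_one_mul_eq, coeff_zero_mul_eq, hP0, hP1, hF0, hQ0, hQ1,
    hG0, hS0, hS1, one_mul, mul_one, zero_mul, mul_zero, add_zero, zero_add]
  abel

end PowerSeries

open PowerSeries

section Hexp

variable {R S : Type*} [Ring R] [Ring S] [Algebra ℂ R] [Algebra ℂ S]

theorem coeff_psMap (f : R →ₐ[ℂ] S) (F : PowerSeries R) (n : ℕ) :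
    coeff n (psMap f F) = f (coeff n F) :=
  coeff_map _ _ _

theorem psMap_hexp (f : R →ₐ[ℂ] S) (x : R) : psMap f (hexp x) = hexp (f x) := by
  ext n
  simp [psMap, hexp, coeff_map, map_pow]

@[simp] theorem coeff_zero_hexp (x : R) : coeff 0 (hexp x) = 1 := by simp [hexp]

@[simp] theorem coeff_one_hexp (x : R) : coeff 1 (hexp x) = x := by simp [hexp]

theorem coeff_two_hexp (x : R) : coeff 2 (hexp x) = (2 : ℂ)⁻¹ • (x * x) := by
  simp [hexp, Nat.factorial, pow_two]

theorem coeff_two_add_add_of_hexp_add_eq {b c : R} {P Q S : PowerSeries R}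
    (hP0 : coeff 0 P = 1) (hP1 : coeff 1 P = 0) (hQ0 : coeff 0 Q = 1) (hQ1 : coeff 1 Q = 0)
    (hS0 : coeff 0 S = 1) (hS1 : coeff 1 S = 0)
    (h : hexp (b + c) = P * hexp b * Q * hexp c * S) :
    coeff 2 P + coeff 2 Q + coeff 2 S = (2 : ℂ)⁻¹ • (c * b - b * c) := by
  have h2 := congrArg (coeff 2) h
  rw [coeff_two_mul_five hP0 hP1 (coeff_zero_hexp b) hQ0 hQ1 (coeff_zero_hexp c) hS0 hS1,
    coeff_two_hexp, coeff_two_hexp, coeff_two_hexp, coeff_one_hexp, coeff_one_hexp] at h2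
  have hsq : (b + c) * (b + c) = b * b + c * c + (b * c + c * b) := by noncomm_ring
  rw [hsq] at h2
  linear_combination (norm := module) -h2

end Hexp

theorem mul_sub_mul_eq_of_commute_add_add {B : Type*} [Ring B] {a b c : B}
    (h : Commute (a + b + c) c) : c * b - b * c = a * c - c * a := by
  have h' := h.eq
  simp only [add_mul, mul_add] at h'
  linear_combination (norm := noncomm_ring) -h'

theorem stmt15_general {A : Type*} [Ring A] [Algebra ℂ A]
    (Δ : A →ₐ[ℂ] A ⊗[ℂ] A)
    (Ω : A ⊗[ℂ] A)
    (hΩ1 : dio Δ Ω = i13 A Ω + i23 A Ω)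
    (hΩ2 : iod Δ Ω = i12 A Ω + i13 A Ω)
    (hΩc12 : Commute (i12 A Ω + i13 A Ω + i23 A Ω) (i12 A Ω))
    (hΩc23 : Commute (i12 A Ω + i13 A Ω + i23 A Ω) (i23 A Ω))
    (Φ Φinv : PowerSeries ((A ⊗[ℂ] A) ⊗[ℂ] A))
    (hΦ0 : PowerSeries.coeff 0 Φ = 1)
    (hΦ1 : PowerSeries.coeff 1 Φ = 0)
    (φ : (A ⊗[ℂ] A) ⊗[ℂ] A) (hφ : PowerSeries.coeff 2 Φ = φ)
    (hΦinv : Φ * Φinv = 1 ∧ Φinv * Φ = 1)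
    (h321 : Φinv = psMap (s13 A).toAlgHom Φ)
    (hhex1 : psMap (dio Δ) (hexp Ω) =
      psMap (p312 A).toAlgHom Φ * psMap (i13 A) (hexp Ω) *
        psMap (s23 A).toAlgHom Φinv * psMap (i23 A) (hexp Ω) * Φ)
    (hhex2 : psMap (iod Δ) (hexp Ω) =
      psMap (p231 A).toAlgHom Φinv * psMap (i13 A) (hexp Ω) *
        psMap (s12 A).toAlgHom Φ * psMap (i12 A) (hexp Ω) * Φinv) :
    φ - (s12 A) φ - (s23 A) φ + (p231 A) φ + (p312 A) φ - (s13 A) φ =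
      i12 A Ω * i23 A Ω - i23 A Ω * i12 A Ω := by
  obtain ⟨hI0, hI1, hI2⟩ := coeff_inv_of_mul_eq_one hΦinv.1 hΦ0 hΦ1
  have h13 : s13 A φ = -φ := by
    simpa [coeff_psMap, hφ, hI2] using (congrArg (coeff 2) h321).symm
  rw [psMap_hexp, psMap_hexp, psMap_hexp, hΩ1] at hhex1
  rw [psMap_hexp, psMap_hexp, psMap_hexp, hΩ2, add_comm] at hhex2
  have hex1 := coeff_two_add_add_of_hexp_add_eq (by simp [coeff_psMap, hΦ0])
    (by simp [coeff_psMap, hΦ1]) (by simp [coeff_psMap, hI0]) (by simp [coeff_psMap, hI1])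
    hΦ0 hΦ1 hhex1
  have hex2 := coeff_two_add_add_of_hexp_add_eq (by simp [coeff_psMap, hI0])
    (by simp [coeff_psMap, hI1]) (by simp [coeff_psMap, hΦ0]) (by simp [coeff_psMap, hΦ1])
    hI0 hI1 hhex2
  simp only [coeff_psMap, AlgEquiv.coe_toAlgHom, hI2, hφ, map_neg] at hex1 hex2
  have c12 := mul_sub_mul_eq_of_commute_add_add (a := i23 A Ω) (b := i13 A Ω) (c := i12 A Ω)
    (by rwa [add_comm _ (i12 A Ω), add_comm (i23 A Ω), ← add_assoc])
  have c23 := mul_sub_mul_eq_of_commute_add_add hΩc23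
  rw [h13]
  linear_combination (norm := module) hex1 - hex2 + (2 : ℂ)⁻¹ • c23 - (2 : ℂ)⁻¹ • c12

/-- Let `Ω ∈ U(g)⊗U(g)` be the symmetric invariant tensor,
`R = exp(ħΩ)`, and `Φ = 1 + ħ²φ + O(ħ³)` an invariant solution of the pentagon and
hexagon equations with `Φ⁻¹ = Φ₍₃₂₁₎`. Then `Alt₃ φ = (1/6)[Ω₁₂, Ω₂₃]`, i.e.
`∑_{σ ∈ S₃} sgn(σ) φ^σ = [Ω₁₂, Ω₂₃]`. (Here `A` plays the role of `U(g)` with its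
cocommutative coproduct `Δ`.) -/
theorem stmt15 {A : Type*} [Ring A] [Algebra ℂ A]
    (Δ : A →ₐ[ℂ] A ⊗[ℂ] A)
    (hcoassoc : (dio Δ).comp Δ = (iod Δ).comp Δ)
    (hcocomm : ∀ a : A, (Algebra.TensorProduct.comm ℂ A A) (Δ a) = Δ a)
    (Ω : A ⊗[ℂ] A)
    (hΩsymm : (Algebra.TensorProduct.comm ℂ A A) Ω = Ω)
    (hΩinv : ∀ a : A, Commute Ω (Δ a))
    (hΩ1 : dio Δ Ω = i13 A Ω + i23 A Ω)
    (hΩ2 : iod Δ Ω = i12 A Ω + i13 A Ω)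
    (hΩc12 : Commute (i12 A Ω + i13 A Ω + i23 A Ω) (i12 A Ω))
    (hΩc13 : Commute (i12 A Ω + i13 A Ω + i23 A Ω) (i13 A Ω))
    (hΩc23 : Commute (i12 A Ω + i13 A Ω + i23 A Ω) (i23 A Ω))
    (Φ Φinv : PowerSeries ((A ⊗[ℂ] A) ⊗[ℂ] A))
    (hΦ0 : PowerSeries.coeff 0 Φ = 1)
    (hΦ1 : PowerSeries.coeff 1 Φ = 0)
    (φ : (A ⊗[ℂ] A) ⊗[ℂ] A) (hφ : PowerSeries.coeff 2 Φ = φ)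
    (hΦg : ∀ (a : A) (n : ℕ), Commute (PowerSeries.coeff n Φ) (Δ3 Δ a))
    (hΦinv : Φ * Φinv = 1 ∧ Φinv * Φ = 1)
    (h321 : Φinv = psMap (s13 A).toAlgHom Φ)
    (hpentagon : (psMap (q3 Δ) Φ : PowerSeries (((A ⊗[ℂ] A) ⊗[ℂ] A) ⊗[ℂ] A)) *
        psMap (q1 Δ) Φ =
      psMap (e1 A) Φ * psMap (q2 Δ) Φ * psMap (e4 A) Φ)
    (hhex1 : psMap (dio Δ) (hexp Ω) =
      psMap (p312 A).toAlgHom Φ * psMap (i13 A) (hexp Ω) *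
        psMap (s23 A).toAlgHom Φinv * psMap (i23 A) (hexp Ω) * Φ)
    (hhex2 : psMap (iod Δ) (hexp Ω) =
      psMap (p231 A).toAlgHom Φinv * psMap (i13 A) (hexp Ω) *
        psMap (s12 A).toAlgHom Φ * psMap (i12 A) (hexp Ω) * Φinv) :
    φ - (s12 A) φ - (s23 A) φ + (p231 A) φ + (p312 A) φ - (s13 A) φ =
      i12 A Ω * i23 A Ω - i23 A Ω * i12 A Ω :=
  stmt15_general Δ Ω hΩ1 hΩ2 hΩc12 hΩc23 Φ Φinv hΦ0 hΦ1 φ hφ hΦinv h321 hhex1 hhex2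
end
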